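/- Let G be a topological group, let ν ∈ Meas(rG) be a left-invariant mean, let μ ∈ Meas(rG) be a uniform measure, and let f ∈ Ub(rG). Then the function L_μ f : y ↦ μ(x ↦ f(x·y)) belongs to Ub(rG), and ν(L_μ f) = (μ ⋆ ν)(f) = μ(1) · ν(f), where 1 is the constant function with value 1. -/

import Mathlib

noncomputable section

open Filter Topology

/-- `f` is a bounded uniformly continuous real-valued function,
i.e. a member of `Ub(X)`. -/
def IsUb {X : Type*} [UniformSpace X] (f : X → ℝ) : Prop :=
  UniformContinuous f ∧ ∃ C : ℝ, ∀ x, |f x| ≤ C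

/-- Supremum norm of a real-valued function. -/
def supNorm {α : Type*} (f : α → ℝ) : ℝ :=
  sSup (Set.range fun x => |f x|)

/-- `μ` is (the restriction to `Ub(X)` of) a norm-continuous linear functional on `Ub(X)`,
i.e. a member of `Meas(X)`.  It is represented as a bare map on all functions;
only its values on `Ub(X)` are relevant. -/
def IsMeas {X : Type*} [UniformSpace X] (μ : (X → ℝ) → ℝ) : Prop :=
  (∀ f g : X → ℝ, IsUb f → IsUb g → μ (f + g) = μ f + μ g) ∧
  (∀ (c : ℝ) (f : X → ℝ), IsUb f → μ (c • f) = c * μ f) ∧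
  (∃ C : ℝ, ∀ f : X → ℝ, IsUb f → (∀ x, |f x| ≤ 1) → |μ f| ≤ C)

/-- The dual norm on `Meas(X)`:  `‖μ‖ = sup {|μ f| : f ∈ Ub(X), ‖f‖ ≤ 1}`. -/
def measNorm {X : Type*} [UniformSpace X] (μ : (X → ℝ) → ℝ) : ℝ :=
  sSup {r : ℝ | ∃ f : X → ℝ, IsUb f ∧ (∀ x, |f x| ≤ 1) ∧ r = |μ f|}

/-- `μ` is a positive functional:  `μ f ≥ 0` whenever `f ∈ Ub(X)` and `f ≥ 0`. -/
def IsPositive {X : Type*} [UniformSpace X] (μ : (X → ℝ) → ℝ) : Prop :=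
  ∀ f : X → ℝ, IsUb f → (∀ x, 0 ≤ f x) → 0 ≤ μ f

/-- `μ` is a *uniform measure*: on every norm-bounded uniformly equicontinuous set
`H ⊆ Ub(X)`, `μ` is continuous for the topology of pointwise convergence. -/
def IsUniformMeasure {X : Type*} [UniformSpace X] (μ : (X → ℝ) → ℝ) : Prop :=
  ∀ H : Set (X → ℝ),
    (∃ C : ℝ, ∀ f ∈ H, ∀ x, |f x| ≤ C) →
    H.UniformEquicontinuous →
    ∀ f₀ ∈ H, ∀ ε : ℝ, 0 < ε →
      ∃ (K : Finset X) (δ : ℝ), 0 < δ ∧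
        ∀ f ∈ H, (∀ x ∈ K, |f x - f₀ x| < δ) → |μ f - μ f₀| < ε

/-- A *semiuniform* function on `X × Y`, i.e. a member of `Ub(X ⋉ Y)` where `X ⋉ Y` is the
semiuniform product: `f` is bounded, the family of sections `x ↦ f (x, y)` (for `y ∈ Y`)
is uniformly equicontinuous on `X`, and every section `y ↦ f (x, y)` is uniformly
continuous on `Y`. -/
def Semiuniform {X Y : Type*} [UniformSpace X] [UniformSpace Y] (f : X × Y → ℝ) : Prop :=
  (∃ C : ℝ, ∀ p, |f p| ≤ C) ∧
  UniformEquicontinuous (fun y : Y => fun x : X => f (x, y)) ∧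
  ∀ x : X, UniformContinuous fun y : Y => f (x, y)

/-- The direct product `μ ⊗ ν`, evaluated at `f : X × Y → ℝ`:
`(μ ⊗ ν)(f) = μ (x ↦ ν (y ↦ f (x, y)))`. -/
def dirProd {X Y : Type*} (μ : (X → ℝ) → ℝ) (ν : (Y → ℝ) → ℝ) (f : X × Y → ℝ) : ℝ :=
  μ fun x => ν fun y => f (x, y)

/-- Convolution: `(μ ⋆ ν)(f) = μ (x ↦ ν (y ↦ f (x · y)))`. -/
def conv {G : Type*} [Mul G] (μ ν : (G → ℝ) → ℝ) : (G → ℝ) → ℝ :=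
  fun f => μ fun x => ν fun y => f (x * y)

/-- The weak-* topology on `Meas(X)`: the topology of pointwise convergence on `Ub(X)`. -/
def weakStarMeas (X : Type*) [UniformSpace X] :
    TopologicalSpace {ν : (X → ℝ) → ℝ // IsMeas ν} :=
  TopologicalSpace.induced
    (fun ν => fun f : {f : X → ℝ // IsUb f} => ν.1 f.1) Pi.topologicalSpace

/-!
On the absolutely convex hull of a bounded uniformly equicontinuous family `h`, a uniform
measure `μ` is continuous for pointwise convergence, so after rescaling `|μ (∑ lᵢ hᵢ)|` is
dominated by `ε ∑ |lᵢ|` plus a multiple of the sup of `|∑ lᵢ hᵢ|` over a finite set `S`.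
Hahn–Banach splits off the second part as a functional of the values on `S`, giving weights
`c` with `|μ (hᵢ) - ∑_{x ∈ S} c x * hᵢ x| ≤ ε` uniformly in `i`.

For `h y = f (· * y) - f y` this makes `L_μ f` a uniform limit of the functions
`μ 1 * f + ∑ c x * (f (x * ·) - f)`, which are in `Ub(rG)` and which every left-invariant
mean sends to `μ 1 * ν f`.
-/

section BoundedUniformlyContinuous

variable {X : Type*} [UniformSpace X]

theorem isUb_const (c : ℝ) : IsUb fun _ : X => c :=
  ⟨uniformContinuous_const, |c|, fun _ => le_rfl⟩

theorem IsUb.add {f g : X → ℝ} (hf : IsUb f) (hg : IsUb g) : IsUb fun x => f x + g x := by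
  obtain ⟨hf, Cf, hCf⟩ := hf
  obtain ⟨hg, Cg, hCg⟩ := hg
  exact ⟨hf.add hg, Cf + Cg, fun x => (abs_add_le _ _).trans (add_le_add (hCf x) (hCg x))⟩

theorem IsUb.const_mul {f : X → ℝ} (hf : IsUb f) (c : ℝ) : IsUb fun x => c * f x := by
  obtain ⟨hf, C, hC⟩ := hf
  refine ⟨hf.const_smul c, |c| * C, fun x => ?_⟩
  rw [abs_mul]
  exact mul_le_mul_of_nonneg_left (hC x) (abs_nonneg c)

theorem IsUb.sub {f g : X → ℝ} (hf : IsUb f) (hg : IsUb g) : IsUb fun x => f x - g x := by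
  simpa [sub_eq_add_neg] using hf.add (hg.const_mul (-1))

theorem isUb_sum {ι : Type*} (s : Finset ι) {g : ι → X → ℝ} (hg : ∀ i, IsUb (g i)) :
    IsUb fun x => ∑ i ∈ s, g i x := by
  classical
  induction s using Finset.induction with
  | empty => simpa using isUb_const (X := X) 0
  | insert i s hi ih => simpa only [Finset.sum_insert hi] using (hg i).add ih

theorem isUb_of_forall_approx {φ : X → ℝ}
    (h : ∀ ε > 0, ∃ g, IsUb g ∧ ∀ x, |φ x - g x| ≤ ε) : IsUb φ := by
  refine ⟨uniformContinuous_of_uniform_approx_of_uniformContinuous fun U hU => ?_, ?_⟩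
  · obtain ⟨ε, hε, hεU⟩ := Metric.mem_uniformity_dist.1 hU
    obtain ⟨g, hg, hφg⟩ := h (ε / 2) (half_pos hε)
    exact ⟨g, hg.1, fun x => hεU ((hφg x).trans_lt (half_lt_self hε))⟩
  · obtain ⟨g, ⟨-, C, hC⟩, hφg⟩ := h 1 one_pos
    exact ⟨C + 1, fun x => by
      have := abs_sub_abs_le_abs_sub (φ x) (g x)
      linarith [hφg x, hC x]⟩

variable (X) in
def ubSubmodule : Submodule ℝ (X → ℝ) where
  carrier := {f | IsUb f}
  add_mem' hf hg := hf.add hg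
  zero_mem' := isUb_const 0
  smul_mem' c _ hf := hf.const_mul c

end BoundedUniformlyContinuous

namespace IsMeas

variable {X : Type*} [UniformSpace X] {μ : (X → ℝ) → ℝ}

def toLinearMap (hμ : IsMeas μ) : ubSubmodule X →ₗ[ℝ] ℝ where
  toFun f := μ f
  map_add' f g := hμ.1 f g f.2 g.2
  map_smul' c f := hμ.2.1 c f f.2

theorem map_add (hμ : IsMeas μ) {f g : X → ℝ} (hf : IsUb f) (hg : IsUb g) :
    μ (fun x => f x + g x) = μ f + μ g :=
  hμ.1 f g hf hg

theorem map_const_mul (hμ : IsMeas μ) (c : ℝ) {f : X → ℝ} (hf : IsUb f) :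
    μ (fun x => c * f x) = c * μ f :=
  hμ.2.1 c f hf

theorem map_sub (hμ : IsMeas μ) {f g : X → ℝ} (hf : IsUb f) (hg : IsUb g) :
    μ (fun x => f x - g x) = μ f - μ g := by
  have := hμ.map_add hf (hg.const_mul (-1))
  rw [hμ.map_const_mul (-1) hg] at this
  simpa [sub_eq_add_neg] using this

theorem map_const (hμ : IsMeas μ) (c : ℝ) : μ (fun _ => c) = c * μ (fun _ => 1) := by
  simpa using hμ.map_const_mul c (isUb_const 1)

theorem map_sum (hμ : IsMeas μ) {ι : Type*} (s : Finset ι) {g : ι → X → ℝ}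
    (hg : ∀ i, IsUb (g i)) : μ (fun x => ∑ i ∈ s, g i x) = ∑ i ∈ s, μ (g i) := by
  classical
  induction s using Finset.induction with
  | empty => simpa using hμ.map_const 0
  | insert i s hi ih =>
    simp only [Finset.sum_insert hi]
    rw [hμ.map_add (hg i) (isUb_sum s hg), ih]

theorem abs_le_of_isPositive (hμ : IsMeas μ) (hpos : IsPositive μ) (h1 : μ (fun _ => 1) = 1)
    {r : X → ℝ} (hr : IsUb r) {ε : ℝ} (hrε : ∀ x, |r x| ≤ ε) : |μ r| ≤ ε := by
  have hupper := hpos _ ((isUb_const ε).sub hr) fun x => sub_nonneg.2 (abs_le.1 (hrε x)).2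
  have hlower := hpos _ (hr.add (isUb_const ε)) fun x => by linarith [(abs_le.1 (hrε x)).1]
  rw [hμ.map_sub (isUb_const ε) hr, hμ.map_const, h1] at hupper
  rw [hμ.map_add hr (isUb_const ε), hμ.map_const, h1] at hlower
  exact abs_le.2 ⟨by linarith, by linarith⟩

end IsMeas

namespace Finsupp
variable {ι : Type*}

variable (ι) in
def l1Seminorm : Seminorm ℝ (ι →₀ ℝ) :=
  Seminorm.of (fun l => l.sum fun _ a => |a|)
    (fun l m => by
      classical
      rw [sum_of_support_subset _ support_add _ (by simp),
        sum_of_support_subset l Finset.subset_union_left _ (by simp),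
        sum_of_support_subset m Finset.subset_union_right _ (by simp), ← Finset.sum_add_distrib]
      exact Finset.sum_le_sum fun i _ => abs_add_le _ _)
    (fun c l => by
      rw [sum_smul_index' (by simp), mul_sum]
      simp [abs_mul])

theorem l1Seminorm_apply (l : ι →₀ ℝ) : l1Seminorm ι l = l.sum fun _ a => |a| := rfl

theorem l1Seminorm_single_one (i : ι) : l1Seminorm ι (single i 1) = 1 := by
  simp [l1Seminorm_apply]

theorem abs_linearCombination_le (l : ι →₀ ℝ) {v : ι → ℝ} {r : ℝ} (hv : ∀ i, |v i| ≤ r) :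
    |linearCombination ℝ v l| ≤ l1Seminorm ι l * r := by
  rw [linearCombination_apply, l1Seminorm_apply, sum_mul]
  refine (Finset.abs_sum_le_sum_abs _ _).trans (Finset.sum_le_sum fun i _ => ?_)
  simp only [smul_eq_mul, abs_mul]
  exact mul_le_mul_of_nonneg_left (hv i) (abs_nonneg _)

theorem uniformEquicontinuous_linearCombination {X : Type*} [UniformSpace X]
    {h : ι → X → ℝ} (heq : UniformEquicontinuous h) :
    UniformEquicontinuous fun l : {l : ι →₀ ℝ // l1Seminorm ι l ≤ 1} =>
      linearCombination ℝ h l.1 := by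
  refine Metric.uniformEquicontinuous_iff_right.2 fun r hr => ?_
  filter_upwards [Metric.uniformEquicontinuous_iff_right.1 heq (r / 2) (half_pos hr)] with p hp
  rintro ⟨l, hl⟩
  change |(LinearMap.proj (R := ℝ) (φ := fun _ : X => ℝ) p.1 - LinearMap.proj p.2 :
    (X → ℝ) →ₗ[ℝ] ℝ) (linearCombination ℝ h l)| < r
  rw [apply_linearCombination]
  calc _ ≤ l1Seminorm ι l * (r / 2) := abs_linearCombination_le l fun i => (hp i).le
    _ < r := by nlinarith [apply_nonneg (l1Seminorm ι) l]

end Finsupp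

section HahnBanach

variable {E W : Type*} [AddCommGroup E] [Module ℝ E] [AddCommGroup W] [Module ℝ W]

theorem LinearMap.abs_le_add_of_lt_one (Λ : E →ₗ[ℝ] ℝ) (p q : Seminorm ℝ E)
    (h : ∀ x, p x < 1 → q x ≤ 1 → |Λ x| < 1) (x : E) : |Λ x| ≤ p x + q x := by
  refine le_of_forall_pos_lt_add fun η hη => ?_
  set D := p x + q x + η
  have hD : 0 < D := by positivity
  have hscaled := h (D⁻¹ • x)
  simp only [map_smul, map_smul_eq_mul, smul_eq_mul, Real.norm_eq_abs, abs_inv,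
    abs_of_pos hD, abs_mul] at hscaled
  rw [inv_mul_lt_one₀ hD, inv_mul_lt_one₀ hD, inv_mul_le_one₀ hD] at hscaled
  exact hscaled (by linarith [apply_nonneg q x]) (by linarith [apply_nonneg p x])

theorem LinearMap.exists_abs_sub_comp_le (Λ : E →ₗ[ℝ] ℝ) (Ψ : E →ₗ[ℝ] W) (p : Seminorm ℝ W)
    (q : Seminorm ℝ E) (h : ∀ x, |Λ x| ≤ p (Ψ x) + q x) :
    ∃ ℓ : W →ₗ[ℝ] ℝ, ∀ x, |Λ x - ℓ (Ψ x)| ≤ q x := by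
  let N : Seminorm ℝ (E × W) := q.comp (LinearMap.fst ℝ E W) + p.comp (LinearMap.snd ℝ E W)
  let Λ' : Module.Dual ℝ (Ψ.graph) := Λ ∘ₗ LinearMap.fst ℝ E W ∘ₗ Ψ.graph.subtype
  obtain ⟨g, hgΛ, hgN⟩ := Module.Dual.exists_extension_of_le_seminorm_real _ Λ' (p := N) <| by
    rintro ⟨⟨x, w⟩, hw : w = Ψ x⟩
    subst hw
    exact (le_abs_self _).trans ((h x).trans_eq (add_comm _ _))
  refine ⟨g ∘ₗ LinearMap.inr ℝ E W, fun x => ?_⟩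
  have hsplit : Λ x - g (0, Ψ x) = g (x, 0) := by
    rw [← show g (x, Ψ x) = Λ x from hgΛ ⟨(x, Ψ x), rfl⟩, ← map_sub]
    simp
  simpa [hsplit, N] using hgN (x, 0)

end HahnBanach

theorem IsUniformMeasure.exists_abs_apply_linearCombination_lt {X ι : Type*} [UniformSpace X]
    {μ : (X → ℝ) → ℝ} (hμu : IsUniformMeasure μ) (hμ : IsMeas μ) {h : ι → X → ℝ} {C : ℝ}
    (hC : ∀ i x, |h i x| ≤ C) (heq : UniformEquicontinuous h) {ε : ℝ} (hε : 0 < ε) :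
    ∃ (S : Finset X) (δ : ℝ), 0 < δ ∧ ∀ l : ι →₀ ℝ, Finsupp.l1Seminorm ι l ≤ 1 →
      (∀ x ∈ S, |Finsupp.linearCombination ℝ h l x| < δ) →
        |μ (Finsupp.linearCombination ℝ h l)| < ε := by
  let H := Set.range fun l : {l : ι →₀ ℝ // Finsupp.l1Seminorm ι l ≤ 1} =>
    Finsupp.linearCombination ℝ h l.1
  have hH_bdd : ∀ g ∈ H, ∀ x, |g x| ≤ |C| := by
    rintro _ ⟨⟨l, hl⟩, rfl⟩ x
    change |Finsupp.linearCombination ℝ h l x| ≤ |C|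
    rw [show Finsupp.linearCombination ℝ h l x = Finsupp.linearCombination ℝ (h · x) l from
      Finsupp.apply_linearCombination ℝ (LinearMap.proj x) h l]
    calc _ ≤ Finsupp.l1Seminorm ι l * |C| :=
          Finsupp.abs_linearCombination_le l fun i => (hC i x).trans (le_abs_self C)
      _ ≤ |C| := mul_le_of_le_one_left (abs_nonneg C) hl
  obtain ⟨S, δ, hδ, hS⟩ := hμu H ⟨|C|, hH_bdd⟩
    (uniformEquicontinuous_iff_range.1 (Finsupp.uniformEquicontinuous_linearCombination heq))
    0 ⟨⟨0, by simp⟩, by simp⟩ ε hε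
  refine ⟨S, δ, hδ, fun l hl hlS => ?_⟩
  have hμ0 : μ 0 = 0 := (hμ.map_const 0).trans (zero_mul _)
  simpa [hμ0] using hS _ ⟨⟨l, hl⟩, rfl⟩ (by simpa using hlS)

theorem IsUniformMeasure.exists_linearMap_approx {X ι : Type*} [UniformSpace X]
    {μ : (X → ℝ) → ℝ} (hμu : IsUniformMeasure μ) (hμ : IsMeas μ) {h : ι → X → ℝ} {C : ℝ}
    (hC : ∀ i x, |h i x| ≤ C) (heq : UniformEquicontinuous h) {ε : ℝ} (hε : 0 < ε) :
    ∃ (S : Finset X) (ℓ : (S → ℝ) →ₗ[ℝ] ℝ), ∀ i, |μ (h i) - ℓ fun x => h i x| ≤ ε := by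
  obtain ⟨S, δ, hδ, hS⟩ := hμu.exists_abs_apply_linearCombination_lt hμ hC heq hε
  let T : (ι →₀ ℝ) →ₗ[ℝ] ubSubmodule X :=
    Finsupp.linearCombination ℝ fun i => ⟨h i, heq.uniformContinuous i, C, hC i⟩
  let Λ : (ι →₀ ℝ) →ₗ[ℝ] ℝ := ε⁻¹ • (hμ.toLinearMap ∘ₗ T)
  let Ψ : (ι →₀ ℝ) →ₗ[ℝ] (S → ℝ) :=
    δ⁻¹ • LinearMap.pi fun x : S => LinearMap.proj (x : X) ∘ₗ Finsupp.linearCombination ℝ h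
  have hdom : ∀ l, |Λ l| ≤ ‖Ψ l‖ + Finsupp.l1Seminorm ι l := by
    refine Λ.abs_le_add_of_lt_one ((normSeminorm ℝ _).comp Ψ) _ fun l hΨ hl => ?_
    have hμl := hS l hl fun x hx => by
      have := (pi_norm_lt_iff one_pos).1 hΨ ⟨x, hx⟩
      rwa [show Ψ l ⟨x, hx⟩ = δ⁻¹ * Finsupp.linearCombination ℝ h l x from rfl,
        Real.norm_eq_abs, abs_mul, abs_inv, abs_of_pos hδ, inv_mul_lt_one₀ hδ] at this
    have hTl : (T l : X → ℝ) = Finsupp.linearCombination ℝ h l :=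
      Finsupp.apply_linearCombination ℝ (ubSubmodule X).subtype _ l
    rw [← hTl] at hμl
    show |ε⁻¹ * μ (T l)| < 1
    rwa [abs_mul, abs_inv, abs_of_pos hε, inv_mul_lt_one₀ hε]
  obtain ⟨ℓ₀, hℓ₀⟩ := Λ.exists_abs_sub_comp_le Ψ (normSeminorm ℝ _) _ hdom
  refine ⟨S, (ε * δ⁻¹) • ℓ₀, fun i => ?_⟩
  have hΛi : Λ (Finsupp.single i 1) = ε⁻¹ * μ (h i) := by
    simp [Λ, T, IsMeas.toLinearMap]
  have hΨi : Ψ (Finsupp.single i 1) = δ⁻¹ • fun x : S => h i x := by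
    ext x
    simp [Ψ]
  have := hℓ₀ (Finsupp.single i 1)
  rw [hΛi, hΨi, Finsupp.l1Seminorm_single_one, map_smul, smul_eq_mul] at this
  calc _ = |ε * (ε⁻¹ * μ (h i) - δ⁻¹ * ℓ₀ fun x => h i x)| := by
        simp only [LinearMap.smul_apply, smul_eq_mul]
        field_simp
    _ ≤ ε := by
        rw [abs_mul, abs_of_pos hε]
        exact mul_le_of_le_one_right hε.le this

theorem IsUniformMeasure.exists_finset_approx {X ι : Type*} [UniformSpace X]
    {μ : (X → ℝ) → ℝ} (hμu : IsUniformMeasure μ) (hμ : IsMeas μ) {h : ι → X → ℝ} {C : ℝ}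
    (hC : ∀ i x, |h i x| ≤ C) (heq : UniformEquicontinuous h) {ε : ℝ} (hε : 0 < ε) :
    ∃ (S : Finset X) (c : S → ℝ), ∀ i, |μ (h i) - ∑ x, c x * h i x| ≤ ε := by
  classical
  obtain ⟨S, ℓ, hℓ⟩ := hμu.exists_linearMap_approx hμ hC heq hε
  refine ⟨S, fun x => ℓ fun j => if x = j then 1 else 0, fun i => ?_⟩
  simpa [LinearMap.pi_apply_eq_sum_univ ℓ (fun x : S => h i x), mul_comm] using hℓ i

theorem IsTopologicalGroup.isRightUniformGroup_rightUniformSpace (G : Type*) [Group G]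
    [TopologicalSpace G] [IsTopologicalGroup G] :
    @IsRightUniformGroup G (IsTopologicalGroup.rightUniformSpace G) _ :=
  @IsRightUniformGroup.mk G (IsTopologicalGroup.rightUniformSpace G) _ ‹_› rfl

namespace IsRightUniformGroup

variable {G : Type*} [Group G] [UniformSpace G] [IsRightUniformGroup G]

theorem uniformEquicontinuous_mul_right : UniformEquicontinuous fun (y x : G) => x * y := by
  intro U hU
  rw [uniformity_eq_comap_mul_inv_nhds_one G] at hU ⊢
  obtain ⟨V, hV, hVU⟩ := hU
  exact mem_of_superset (preimage_mem_comap hV) fun p hp y => hVU (by simpa [mul_assoc] using hp)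

theorem uniformContinuous_mul_left (a : G) : UniformContinuous (a * ·) := by
  have hconj : Tendsto (fun z => a * z * a⁻¹) (𝓝 1) (𝓝 1) := by
    have : Continuous fun z : G => a * z * a⁻¹ := by fun_prop
    simpa using this.tendsto 1
  rw [UniformContinuous, uniformity_eq_comap_mul_inv_nhds_one G, tendsto_comap_iff]
  exact (hconj.comp tendsto_comap).congr fun p => by simp [mul_assoc]

end IsRightUniformGroup

section RightUniformGroup

variable {G : Type*} [Group G] [UniformSpace G] [IsRightUniformGroup G] {μ : (G → ℝ) → ℝ}

theorem IsUb.comp_mul_left {f : G → ℝ} (hf : IsUb f) (a : G) : IsUb fun y => f (a * y) :=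
  ⟨hf.1.comp (IsRightUniformGroup.uniformContinuous_mul_left a), hf.2.imp fun _ hC _ => hC _⟩

theorem IsUb.comp_mul_right {f : G → ℝ} (hf : IsUb f) (a : G) : IsUb fun x => f (x * a) :=
  ⟨hf.1.comp (IsRightUniformGroup.uniformEquicontinuous_mul_right.uniformContinuous a),
    hf.2.imp fun _ hC _ => hC _⟩

theorem IsUb.mul_add_sum_mul_translate_sub {f : G → ℝ} (hf : IsUb f) (a : ℝ) {S : Finset G}
    (c : S → ℝ) : IsUb fun y => a * f y + ∑ x, c x * (f (x * y) - f y) :=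
  (hf.const_mul a).add (isUb_sum _ fun x => ((hf.comp_mul_left x).sub hf).const_mul (c x))

theorem IsUniformMeasure.exists_approx_translate (hμu : IsUniformMeasure μ) (hμ : IsMeas μ)
    {f : G → ℝ} (hf : IsUb f) {ε : ℝ} (hε : 0 < ε) :
    ∃ (S : Finset G) (c : S → ℝ), ∀ y, |μ (fun x => f (x * y)) -
      (μ (fun _ => 1) * f y + ∑ x, c x * (f (x * y) - f y))| ≤ ε := by
  obtain ⟨C, hC⟩ := hf.2
  have hequi : UniformEquicontinuous fun (y x : G) => f (x * y) - f y := by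
    refine Metric.uniformEquicontinuous_iff_right.2 fun r hr => ?_
    filter_upwards [IsRightUniformGroup.uniformEquicontinuous_mul_right _
      (hf.1 (Metric.dist_mem_uniformity hr))] with p hp y
    simpa [dist_sub_right] using hp y
  obtain ⟨S, c, hc⟩ := hμu.exists_finset_approx hμ (C := C + C)
    (fun _ _ => (abs_sub _ _).trans (add_le_add (hC _) (hC _))) hequi hε
  refine ⟨S, c, fun y => ?_⟩
  have := hc y
  rwa [hμ.map_sub (hf.comp_mul_right y) (isUb_const _), hμ.map_const, sub_sub,
    mul_comm (f y)] at this

theorem IsUniformMeasure.isUb_translate (hμu : IsUniformMeasure μ) (hμ : IsMeas μ) {f : G → ℝ}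
    (hf : IsUb f) : IsUb fun y => μ fun x => f (x * y) :=
  isUb_of_forall_approx fun _ hε =>
    let ⟨_, c, hc⟩ := hμu.exists_approx_translate hμ hf hε
    ⟨_, hf.mul_add_sum_mul_translate_sub _ c, hc⟩

theorem IsUniformMeasure.apply_translate_of_invariant_mean (hμu : IsUniformMeasure μ)
    (hμ : IsMeas μ) {ν : (G → ℝ) → ℝ} (hν : IsMeas ν) (hνpos : IsPositive ν)
    (hν1 : ν (fun _ => 1) = 1) {f : G → ℝ} (hf : IsUb f)
    (hνf : ∀ x, ν (fun y => f (x * y)) = ν f) :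
    ν (fun y => μ fun x => f (x * y)) = μ (fun _ => 1) * ν f := by
  refine eq_of_forall_dist_le fun ε hε => ?_
  obtain ⟨S, c, hc⟩ := hμu.exists_approx_translate hμ hf hε
  have hφ := hμu.isUb_translate hμ hf
  have hg := hf.mul_add_sum_mul_translate_sub (μ fun _ => 1) c
  have hdiff : ∀ x : S, IsUb fun y => c x * (f (x * y) - f y) :=
    fun x => ((hf.comp_mul_left x).sub hf).const_mul (c x)
  have hνg : ν (fun y => μ (fun _ => 1) * f y + ∑ x, c x * (f (x * y) - f y)) =
      μ (fun _ => 1) * ν f := by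
    rw [hν.map_add (hf.const_mul _) (isUb_sum _ hdiff), hν.map_const_mul _ hf,
      hν.map_sum _ hdiff]
    simp [hν.map_const_mul _ ((hf.comp_mul_left _).sub hf), hν.map_sub (hf.comp_mul_left _) hf,
      hνf]
  rw [Real.dist_eq, ← hνg, ← hν.map_sub hφ hg]
  exact hν.abs_le_of_isPositive hνpos hν1 (hφ.sub hg) hc

end RightUniformGroup

theorem conv_eq_mul_of_forall_translate_eq {G : Type*} [Mul G] [UniformSpace G]
    {μ ν : (G → ℝ) → ℝ} (hμ : IsMeas μ) {f : G → ℝ} (hν : ∀ x, ν (fun y => f (x * y)) = ν f) :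
    conv μ ν f = μ (fun _ => 1) * ν f := by
  rw [conv, funext hν, hμ.map_const, mul_comm]

theorem stmt18 {G : Type*} [Group G] [TopologicalSpace G] [IsTopologicalGroup G] :
    letI : UniformSpace G := IsTopologicalGroup.rightUniformSpace G
    ∀ μ ν : (G → ℝ) → ℝ,
      IsMeas ν → IsPositive ν → ν (fun _ => 1) = 1 →
      (∀ (x : G) (g : G → ℝ), IsUb g → ν (fun y => g (x * y)) = ν g) →
      IsMeas μ → IsUniformMeasure μ →
      ∀ f : G → ℝ, IsUb f →
        IsUb (fun y => μ fun x => f (x * y)) ∧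
          ν (fun y => μ fun x => f (x * y)) = conv μ ν f ∧
          conv μ ν f = μ (fun _ => 1) * ν f := by
  let : UniformSpace G := IsTopologicalGroup.rightUniformSpace G
  have := IsTopologicalGroup.isRightUniformGroup_rightUniformSpace G
  intro μ ν hν hνpos hν1 hνinv hμ hμu f hf
  have hνf : ∀ x, ν (fun y => f (x * y)) = ν f := fun x => hνinv x f hf
  have hconv := conv_eq_mul_of_forall_translate_eq hμ hνf
  exact ⟨hμu.isUb_translate hμ hf,
    (hμu.apply_translate_of_invariant_mean hμ hν hνpos hν1 hf hνf).trans hconv.symm, hconv⟩
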